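/- arXiv:1708.06174 — 3 statements merged into one kernel-verified Lean document; each statement's English description precedes it below -/
import Mathlib

section
/- Let Γ be a subgroup of SL(2,ℝ)^r (r ≥ 1) and let r_X > 0. Assume that for every γ = (γ₁,…,γ_r) ∈ Γ with γ ≠ 1, every index 1 ≤ j ≤ r, and every z in the upper half-plane ℍ, one has d_ℍ(z, γ_j·z) ≥ r_X. Then for every point (z₁,…,z_r) ∈ ℍ^r the family (∏_{j=1}^{r} exp(−2·d_ℍ(z_j, γ_j·z_j)))_{γ ∈ Γ} is summable and ∑_{γ ∈ Γ} ∏_{j=1}^{r} exp(−2·d_ℍ(z_j, γ_j·z_j)) ≤ (9 + 1/(4·sinh²(r_X/4)))^r. -/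
/-!
Every factor `exp (-2 d)` is at most `1` and `9 + 1 / (4 sinh² (r_X / 4)) ≥ 1`, so it suffices to
bound the sum of the factors of one coordinate `j₀`. The displacement hypothesis makes the orbit
points `γ_{j₀} z_{j₀}` pairwise `r_X`-separated, so the hyperbolic discs of radius `ρ = r_X / 2`
around them are disjoint. As a hyperbolic disc of radius `R` has area `2π (cosh R - 1)`, at most
`N(t) = (cosh (t + ρ) - 1) / (cosh ρ - 1)` orbit points lie within distance `t` of `z_{j₀}`.
Writing `exp (-2 d) = ∫_{t > d} 2 exp (-2 t) dt` and summing bounds the sum by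
`∫_{t > 0} 2 exp (-2 t) N(t) dt = (e^ρ + e^{-ρ} / 3 - 1) / (cosh ρ - 1)`, which is at most
`9 + 1 / (4 sinh² (ρ / 2))`.
-/

open Real UpperHalfPlane Matrix
open scoped MatrixGroups

open MeasureTheory Set Metric

lemma integral_cos_sq_div_add_mul_sin_sq {b R : ℝ} (hR : 0 < R) (hRb : R < b) :
    ∫ θ in -(π / 2)..π / 2, 2 * R ^ 2 * cos θ ^ 2 / (b + R * sin θ) ^ 2 =
      2 * π * (b / √(b ^ 2 - R ^ 2) - 1) := by
  set s := √(b ^ 2 - R ^ 2)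
  have hs2 : s ^ 2 = b ^ 2 - R ^ 2 := sq_sqrt (by nlinarith)
  have hs : 0 < s := sqrt_pos.2 (by nlinarith)
  have hpos : ∀ θ, 0 < b + R * sin θ := fun θ => by nlinarith [neg_one_le_sin θ]
  -- the Weierstrass substitution `u = tan (θ / 2)` produces this antiderivative
  let G : ℝ → ℝ := fun θ =>
    -2 * θ + 4 * b / s * arctan ((b * tan (θ / 2) + R) / s) - 2 * R * (cos θ / (b + R * sin θ))
  have hG : ∀ θ ∈ uIcc (-(π / 2)) (π / 2),
      HasDerivAt G (2 * R ^ 2 * cos θ ^ 2 / (b + R * sin θ) ^ 2) θ := by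
    intro θ hθ
    rw [uIcc_of_le (by linarith [pi_pos])] at hθ
    have hc : 0 < cos (θ / 2) :=
      cos_pos_of_mem_Ioo ⟨by linarith [hθ.1, pi_pos], by linarith [hθ.2, pi_pos]⟩
    have hhalf : HasDerivAt (fun θ : ℝ => θ / 2) (1 / 2) θ := (hasDerivAt_id' θ).div_const 2
    have htan : HasDerivAt (fun θ => tan (θ / 2)) (1 / cos (θ / 2) ^ 2 * (1 / 2)) θ := by
      exact (Real.hasDerivAt_tan hc.ne').comp θ hhalf
    have harctan := (hasDerivAt_arctan _).comp θ (((htan.const_mul b).add_const R).div_const s)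
    have hfrac := (hasDerivAt_cos θ).div (((hasDerivAt_sin θ).const_mul R).const_add b)
      (hpos θ).ne'
    refine ((((hasDerivAt_id θ).const_mul (-2)).add (harctan.const_mul (4 * b / s))).sub
      (hfrac.const_mul (2 * R))).congr_deriv ?_
    have hsin : sin θ = 2 * sin (θ / 2) * cos (θ / 2) := by
      rw [← sin_two_mul]; ring_nf
    have key : 1 + ((b * tan (θ / 2) + R) / s) ^ 2 =
        b * (b + R * sin θ) / (s ^ 2 * cos (θ / 2) ^ 2) := by
      rw [tan_eq_sin_div_cos, hsin]
      field_simp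
      linear_combination cos (θ / 2) ^ 2 * hs2 + b ^ 2 * sin_sq_add_cos_sq (θ / 2)
    have hu := hpos θ
    simp only [key]
    field_simp
    ring
  have hint : IntervalIntegrable (fun θ => 2 * R ^ 2 * cos θ ^ 2 / (b + R * sin θ) ^ 2)
      volume (-(π / 2)) (π / 2) :=
    Continuous.intervalIntegrable
      (.div (by fun_prop) (by fun_prop) fun θ => (pow_pos (hpos θ) 2).ne') _ _
  have hend : arctan ((b + R) / s) + arctan ((b - R) / s) = π / 2 := by
    have hinv : ((b + R) / s)⁻¹ = (b - R) / s := by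
      rw [inv_div, div_eq_div_iff (by linarith) hs.ne']
      nlinarith
    rw [← hinv, arctan_inv_of_pos (div_pos (by linarith) hs)]
    ring
  rw [intervalIntegral.integral_eq_sub_of_hasDerivAt hG hint]
  simp only [G, show π / 2 / 2 = π / 4 by ring, show -(π / 2) / 2 = -(π / 4) by ring, tan_neg,
    tan_pi_div_four, cos_neg, cos_pi_div_two, show b * -1 + R = -(b - R) by ring, neg_div,
    arctan_neg, mul_one, zero_div, mul_zero]
  linear_combination 4 * b / s * hend

lemma integral_sqrt_sub_sq_div_sq {b R : ℝ} (hR : 0 < R) (hRb : R < b) :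
    ∫ y in b - R..b + R, 2 * √(R ^ 2 - (y - b) ^ 2) / y ^ 2 =
      2 * π * (b / √(b ^ 2 - R ^ 2) - 1) := by
  have hpos : ∀ θ, 0 < b + R * sin θ := fun θ => by nlinarith [neg_one_le_sin θ]
  have hg : ContinuousOn (fun y => 2 * √(R ^ 2 - (y - b) ^ 2) / y ^ 2)
      ((fun θ => b + R * sin θ) '' uIcc (-(π / 2)) (π / 2)) := by
    refine (Continuous.continuousOn (by fun_prop)).div (Continuous.continuousOn (by fun_prop)) ?_
    rintro _ ⟨θ, -, rfl⟩
    exact pow_ne_zero _ (hpos θ).ne'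
  have hsubst := intervalIntegral.integral_comp_mul_deriv'
    (fun θ _ => ((hasDerivAt_sin θ).const_mul R).const_add b)
    (Continuous.continuousOn (by fun_prop : Continuous fun θ => R * cos θ)) hg
  simp only [sin_neg, sin_pi_div_two, mul_neg, mul_one, ← sub_eq_add_neg] at hsubst
  rw [← hsubst, ← integral_cos_sq_div_add_mul_sin_sq hR hRb]
  refine intervalIntegral.integral_congr fun θ hθ => ?_
  rw [uIcc_of_le (by linarith [pi_pos])] at hθ
  have hcos : √(R ^ 2 - (b + R * sin θ - b) ^ 2) = R * cos θ := by
    rw [← sqrt_sq (mul_nonneg hR.le (cos_nonneg_of_mem_Icc hθ))]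
    congr 1
    linear_combination (-R ^ 2) * sin_sq_add_cos_sq θ
  simp only [Function.comp_apply, hcos]
  ring

lemma setLIntegral_ball_ofReal_inv_im_sq (c : ℂ) {R : ℝ} (hR : 0 < R) (hRc : R < c.im) :
    ∫⁻ z in ball c R, ENNReal.ofReal (z.im⁻¹ ^ 2) =
      ENNReal.ofReal (2 * π * (c.im / √(c.im ^ 2 - R ^ 2) - 1)) := by
  set K : ℝ → ℝ := fun y => R ^ 2 - (y - c.im) ^ 2
  set f : ℂ → ENNReal := (ball c R).indicator fun z => ENNReal.ofReal (z.im⁻¹ ^ 2)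
  have hf : Measurable f := by unfold f; fun_prop (disch := exact measurableSet_ball)
  have hslice : ∀ x y : ℝ, f ⟨x, y⟩ = (Ioo (c.re - √(K y)) (c.re + √(K y))).indicator
      (fun _ => ENNReal.ofReal (y⁻¹ ^ 2)) x := by
    intro x y
    have hmem : (⟨x, y⟩ : ℂ) ∈ ball c R ↔
        x ∈ Ioo (c.re - √(K y)) (c.re + √(K y)) := by
      rw [mem_ball, Complex.dist_eq_re_im, sqrt_lt' hR, mem_Ioo, sub_lt_comm,
        ← sub_lt_iff_lt_add', ← neg_sub x c.re, neg_lt, ← sq_lt]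
      exact lt_sub_iff_add_lt.symm
    simp only [f, indicator, hmem]
  have hF : ∀ y, ∫⁻ x, f ⟨x, y⟩ = ENNReal.ofReal (2 * √(K y) / y ^ 2) := by
    intro y
    simp only [hslice]
    rw [lintegral_indicator_const measurableSet_Ioo, Real.volume_Ioo,
      ← ENNReal.ofReal_mul (by positivity)]
    congr 1
    ring
  have hsupp :
      (fun y => ENNReal.ofReal (2 * √(K y) / y ^ 2)).support ⊆ Ioc (c.im - R) (c.im + R) := by
    intro y hy
    have hK : 0 < K y := by
      by_contra! hK
      simp [sqrt_eq_zero'.2 hK] at hy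
    simp only [K] at hK
    constructor <;> nlinarith
  have hint : IntegrableOn (fun y => 2 * √(K y) / y ^ 2) (Ioc (c.im - R) (c.im + R)) := by
    refine (ContinuousOn.integrableOn_Icc ?_).mono_set Ioc_subset_Icc_self
    refine (Continuous.continuousOn (by fun_prop)).div (Continuous.continuousOn (by fun_prop)) ?_
    intro y hy
    exact pow_ne_zero _ (by linarith [hy.1])
  calc ∫⁻ z in ball c R, ENNReal.ofReal (z.im⁻¹ ^ 2)
      = ∫⁻ p : ℝ × ℝ, f (Complex.measurableEquivRealProd.symm p) := by
        rw [← lintegral_indicator measurableSet_ball,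
          Complex.volume_preserving_equiv_real_prod.symm.lintegral_comp hf]
    _ = ∫⁻ y, ∫⁻ x, f ⟨x, y⟩ := by
        rw [Measure.volume_eq_prod,
          lintegral_prod_symm' (fun p => f _) (hf.comp (MeasurableEquiv.measurable _))]
        rfl
    _ = ∫⁻ y in Ioc (c.im - R) (c.im + R), ENNReal.ofReal (2 * √(K y) / y ^ 2) := by
        simp only [hF]
        exact (setLIntegral_eq_of_support_subset hsupp).symm
    _ = ENNReal.ofReal (∫ y in c.im - R..c.im + R, 2 * √(K y) / y ^ 2) := by
        rw [intervalIntegral.integral_of_le (by linarith),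
          ofReal_integral_eq_lintegral_ofReal hint (.of_forall fun y => by positivity)]
    _ = _ := by rw [integral_sqrt_sub_sq_div_sq hR hRc]

theorem UpperHalfPlane.volume_ball (w : ℍ) {ρ : ℝ} (hρ : 0 < ρ) :
    volume (ball w ρ) = ENNReal.ofReal (2 * π * (cosh ρ - 1)) := by
  have hR : 0 < w.im * sinh ρ := mul_pos w.im_pos (sinh_pos_iff.2 hρ)
  have hRc : w.im * sinh ρ < (w.center ρ : ℂ).im := by
    rw [coe_im, center_im]
    exact mul_lt_mul_of_pos_left (sinh_lt_cosh ρ) w.im_pos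
  have hdensity : ∀ z : ℂ,
      (((1 / ‖z.im‖₊) ^ 2 : NNReal) : ENNReal) = ENNReal.ofReal (z.im⁻¹ ^ 2) := fun z => by
    rw [← ENNReal.ofReal_coe_nnreal]
    simp
  have hsq : (w.im * cosh ρ) ^ 2 - (w.im * sinh ρ) ^ 2 = w.im ^ 2 := by
    linear_combination w.im ^ 2 * cosh_sq_sub_sinh_sq ρ
  simp only [volume_eq_lintegral, image_coe_ball, hdensity,
    setLIntegral_ball_ofReal_inv_im_sq _ hR hRc, coe_im, center_im, hsq, sqrt_sq w.im_pos.le]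
  congr 1
  field_simp

lemma sum_measure_ball_le_of_pairwise_le_dist {ι X : Type*} [PseudoMetricSpace X]
    [MeasurableSpace X] [OpensMeasurableSpace X] (μ : Measure X) {p : ι → X} {r : ℝ}
    (hp : Pairwise fun i j => r ≤ dist (p i) (p j)) (s : Finset ι) {z : X} {t : ℝ}
    (hs : ∀ i ∈ s, dist z (p i) ≤ t) :
    ∑ i ∈ s, μ (ball (p i) (r / 2)) ≤ μ (ball z (t + r / 2)) := by
  rw [← measure_biUnion_finset (fun i _ j _ hij => ball_disjoint_ball (by linarith [hp hij]))
    fun i _ => measurableSet_ball]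
  refine measure_mono (iUnion₂_subset fun i hi => ball_subset_ball' ?_)
  linarith [hs i hi, dist_comm z (p i)]

lemma card_mul_cosh_sub_one_le {ι : Type*} {p : ι → ℍ} {r : ℝ} (hr : 0 < r)
    (hp : Pairwise fun i j => r ≤ dist (p i) (p j)) (s : Finset ι) {z : ℍ} {t : ℝ}
    (ht : 0 ≤ t) (hs : ∀ i ∈ s, dist z (p i) ≤ t) :
    s.card * (cosh (r / 2) - 1) ≤ cosh (t + r / 2) - 1 := by
  have h := sum_measure_ball_le_of_pairwise_le_dist volume hp s hs
  simp only [UpperHalfPlane.volume_ball _ (half_pos hr),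
    UpperHalfPlane.volume_ball _ (by positivity : 0 < t + r / 2), Finset.sum_const,
    nsmul_eq_mul] at h
  rw [← ENNReal.ofReal_natCast, ← ENNReal.ofReal_mul (by positivity),
    ENNReal.ofReal_le_ofReal_iff (by nlinarith [one_le_cosh (t + r / 2), pi_pos])] at h
  nlinarith [pi_pos]

lemma sum_exp_neg_mul_le_integral {ι : Type*} (s : Finset ι) {d : ι → ℝ}
    (hd : ∀ i ∈ s, 0 ≤ d i) {a : ℝ} (ha : 0 < a) {g : ℝ → ℝ}
    (hg : IntegrableOn (fun t => a * exp (-a * t) * g t) (Ioi 0))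
    (hcount : ∀ t > 0, ((s.filter fun i => d i < t).card : ℝ) ≤ g t) :
    ∑ i ∈ s, exp (-a * d i) ≤ ∫ t in Ioi 0, a * exp (-a * t) * g t := by
  set φ : ℝ → ℝ := fun t => a * exp (-a * t)
  have hφ : IntegrableOn φ (Ioi 0) :=
    (integrableOn_exp_mul_Ioi (neg_neg_of_pos ha) 0).const_mul a
  have hlayer : ∀ i ∈ s, exp (-a * d i) = ∫ t in Ioi 0, (Ioi (d i)).indicator φ t := by
    intro i hi
    rw [setIntegral_indicator measurableSet_Ioi, inter_eq_right.2 (Ioi_subset_Ioi (hd i hi)),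
      integral_const_mul, integral_exp_mul_Ioi (neg_neg_of_pos ha)]
    field_simp
  have hsum : ∀ t, ∑ i ∈ s, (Ioi (d i)).indicator φ t =
      (s.filter fun i => d i < t).card * φ t := fun t => by
    simp only [indicator_apply, mem_Ioi, Finset.sum_ite, Finset.sum_const_zero, add_zero,
      Finset.sum_const, nsmul_eq_mul]
  have hφ' : ∀ i ∈ s, IntegrableOn ((Ioi (d i)).indicator φ) (Ioi 0) :=
    fun i _ => hφ.indicator measurableSet_Ioi
  rw [Finset.sum_congr rfl hlayer, ← integral_finsetSum _ hφ']
  refine setIntegral_mono_on (integrable_finsetSum _ hφ') hg measurableSet_Ioi fun t ht => ?_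
  rw [hsum, mul_comm]
  exact mul_le_mul_of_nonneg_left (hcount t ht) (by positivity)

lemma two_mul_exp_neg_two_mul_mul_cosh_add_sub_one (ρ t : ℝ) :
    2 * exp (-2 * t) * (cosh (t + ρ) - 1) =
      exp ρ * exp (-1 * t) + exp (-ρ) * exp (-3 * t) - 2 * exp (-2 * t) := by
  have e₁ : exp ρ * exp (-1 * t) = exp (-2 * t) * exp (t + ρ) := by
    rw [← exp_add, ← exp_add]; ring_nf
  have e₂ : exp (-ρ) * exp (-3 * t) = exp (-2 * t) * exp (-(t + ρ)) := by
    rw [← exp_add, ← exp_add]; ring_nf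
  rw [cosh_eq, e₁, e₂]
  ring

lemma integrableOn_exp_neg_two_mul_mul_cosh_add_sub_one (ρ : ℝ) :
    IntegrableOn (fun t => 2 * exp (-2 * t) * (cosh (t + ρ) - 1)) (Ioi 0) := by
  simp only [two_mul_exp_neg_two_mul_mul_cosh_add_sub_one]
  exact (((integrableOn_exp_mul_Ioi (by norm_num) 0).const_mul _).add
    ((integrableOn_exp_mul_Ioi (by norm_num) 0).const_mul _)).sub
    ((integrableOn_exp_mul_Ioi (by norm_num) 0).const_mul _)

lemma integral_exp_neg_two_mul_mul_cosh_add_sub_one (ρ : ℝ) :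
    ∫ t in Ioi 0, 2 * exp (-2 * t) * (cosh (t + ρ) - 1) = exp ρ + exp (-ρ) / 3 - 1 := by
  have h : ∀ {k : ℝ}, k < 0 → ∀ c, IntegrableOn (fun t => c * exp (k * t)) (Ioi 0) :=
    fun hk c => (integrableOn_exp_mul_Ioi hk 0).const_mul c
  simp only [two_mul_exp_neg_two_mul_mul_cosh_add_sub_one]
  rw [integral_sub ?_ (h (by norm_num) _), integral_add (h (by norm_num) _) (h (by norm_num) _),
    integral_const_mul, integral_const_mul, integral_const_mul, integral_exp_mul_Ioi (by norm_num),
    integral_exp_mul_Ioi (by norm_num), integral_exp_mul_Ioi (by norm_num)]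
  · norm_num
    ring
  · exact (h (by norm_num) _).add (h (by norm_num) _)

lemma exp_add_exp_neg_div_three_sub_one_div_le {ρ : ℝ} (hρ : 0 < ρ) :
    (exp ρ + exp (-ρ) / 3 - 1) / (cosh ρ - 1) ≤ 9 + 1 / (4 * sinh (ρ / 2) ^ 2) := by
  have hs : 0 < sinh (ρ / 2) := sinh_pos_iff.2 (half_pos hρ)
  have hcosh : cosh ρ - 1 = 2 * sinh (ρ / 2) ^ 2 := by
    rw [← add_halves ρ, cosh_add, ← sq, ← sq, cosh_sq, add_halves]
    ring
  have hrhs : (9 + 1 / (4 * sinh (ρ / 2) ^ 2)) * (cosh ρ - 1) = 9 * (cosh ρ - 1) + 1 / 2 := by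
    rw [hcosh]
    field_simp
    ring
  set x := exp ρ
  have hx : 0 < x := exp_pos ρ
  -- `21 x ^ 2 - 45 x + 25` has negative discriminant
  have hquad : 0 ≤ 21 * x ^ 2 - 45 * x + 25 := by nlinarith [sq_nonneg (42 * x - 45)]
  rw [div_le_iff₀ (by rw [hcosh]; positivity), hrhs, cosh_eq, exp_neg, ← sub_nonneg]
  have hdiff : 9 * ((x + x⁻¹) / 2 - 1) + 1 / 2 - (x + x⁻¹ / 3 - 1) =
      (21 * x ^ 2 - 45 * x + 25) / (6 * x) := by
    field_simp
    ring
  rw [hdiff]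
  positivity

theorem sum_exp_neg_two_dist_le_of_pairwise_le_dist {ι : Type*} {p : ι → ℍ} {r : ℝ}
    (hr : 0 < r) (hp : Pairwise fun i j => r ≤ dist (p i) (p j)) (z : ℍ) (s : Finset ι) :
    ∑ i ∈ s, exp (-2 * dist z (p i)) ≤ 9 + 1 / (4 * sinh (r / 4) ^ 2) := by
  set ρ := r / 2
  have hρ : 0 < cosh ρ - 1 := sub_pos.2 (one_lt_cosh.2 (half_pos hr).ne')
  have hcount : ∀ t > 0, ((s.filter fun i => dist z (p i) < t).card : ℝ) ≤
      (cosh (t + ρ) - 1) / (cosh ρ - 1) := fun t ht =>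
    (le_div_iff₀ hρ).2 <| card_mul_cosh_sub_one_le hr hp _ ht.le fun i hi =>
      (Finset.mem_filter.1 hi).2.le
  calc ∑ i ∈ s, exp (-2 * dist z (p i))
      ≤ ∫ t in Ioi 0, 2 * exp (-2 * t) * ((cosh (t + ρ) - 1) / (cosh ρ - 1)) := by
        refine sum_exp_neg_mul_le_integral s (fun i _ => dist_nonneg) two_pos ?_ hcount
        simp_rw [← mul_div_assoc]
        exact (integrableOn_exp_neg_two_mul_mul_cosh_add_sub_one ρ).div_const _
    _ = (exp ρ + exp (-ρ) / 3 - 1) / (cosh ρ - 1) := by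
        simp_rw [← mul_div_assoc]
        rw [integral_div, integral_exp_neg_two_mul_mul_cosh_add_sub_one]
    _ ≤ 9 + 1 / (4 * sinh (r / 4) ^ 2) := by
        rw [show r / 4 = ρ / 2 by ring]
        exact exp_add_exp_neg_div_three_sub_one_div_le (half_pos hr)

lemma dist_smul_smul_eq_dist_inv_mul_smul {G X : Type*} [Group G] [PseudoMetricSpace X]
    [MulAction G X] [IsIsometricSMul G X] (g h : G) (x : X) :
    dist (g • x) (h • x) = dist x ((g⁻¹ * h) • x) := by
  rw [← dist_smul g⁻¹, smul_smul, smul_smul, inv_mul_cancel, one_smul]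

/-- Let `Γ` be a subgroup of `SL(2, ℝ)^r` (`r ≥ 1`) such that for every `γ ∈ Γ` with `γ ≠ 1`,
every component `γ_j` displaces every point of `ℍ` by at least `r_X > 0`. Then for every
`(z₁, …, z_r) ∈ ℍ^r` the family `γ ↦ ∏_j exp(−2·d(z_j, γ_j z_j))` is summable over `Γ`, with
sum at most `(9 + 1/(4·sinh²(r_X/4)))^r`. -/
theorem sum_prod_exp_neg_two_dist_le (r : ℕ) (hr : 1 ≤ r)
    (Γ : Subgroup (Π _ : Fin r, SL(2, ℝ))) (rX : ℝ) (hrX : 0 < rX)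
    (hdisp : ∀ γ ∈ Γ, γ ≠ 1 → ∀ j : Fin r, ∀ z : ℍ, rX ≤ dist z (γ j • z))
    (z : Fin r → ℍ) :
    Summable (fun γ : Γ =>
        ∏ j : Fin r, Real.exp (-2 * dist (z j) ((γ : Π _ : Fin r, SL(2, ℝ)) j • z j))) ∧
      ∑' γ : Γ, ∏ j : Fin r,
          Real.exp (-2 * dist (z j) ((γ : Π _ : Fin r, SL(2, ℝ)) j • z j)) ≤
        (9 + 1 / (4 * Real.sinh (rX / 4) ^ 2)) ^ r := by
  set f : Γ → ℝ := fun γ =>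
    ∏ j : Fin r, exp (-2 * dist (z j) ((γ : Π _ : Fin r, SL(2, ℝ)) j • z j))
  set C := 9 + 1 / (4 * sinh (rX / 4) ^ 2)
  have hC : 1 ≤ C := le_add_of_le_of_nonneg (by norm_num) (by positivity)
  let j₀ : Fin r := ⟨0, hr⟩
  let orbit : Γ → ℍ := fun γ => (γ : Π _ : Fin r, SL(2, ℝ)) j₀ • z j₀
  have hsep : Pairwise fun γ γ' => rX ≤ dist (orbit γ) (orbit γ') := by
    intro γ γ' hne
    rw [dist_smul_smul_eq_dist_inv_mul_smul]
    exact hdisp _ (γ⁻¹ * γ').2 (by simpa [inv_mul_eq_one] using hne) j₀ (z j₀)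
  have hfactor : ∀ γ, f γ ≤ exp (-2 * dist (z j₀) (orbit γ)) := by
    intro γ
    dsimp only [f, orbit]
    rw [← exp_sum, exp_le_exp, ← Finset.mul_sum, mul_le_mul_left_of_neg (by norm_num)]
    exact Finset.single_le_sum
      (f := fun j => dist (z j) ((γ : Π _ : Fin r, SL(2, ℝ)) j • z j))
      (fun j _ => dist_nonneg) (Finset.mem_univ j₀)
  have hbound : ∀ s : Finset Γ, ∑ γ ∈ s, f γ ≤ C ^ r := fun s =>
    (Finset.sum_le_sum fun γ _ => hfactor γ).trans <|
      (sum_exp_neg_two_dist_le_of_pairwise_le_dist hrX hsep (z j₀) s).trans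
        (le_self_pow₀ hC (by omega))
  have hsummable :=
    summable_of_sum_le (fun γ => Finset.prod_nonneg fun j _ => (exp_pos _).le) hbound
  exact ⟨hsummable, hsummable.tsum_le_of_sum_le hbound⟩
end

section
/- For every real number r > 0, one has e^{−3r/2} · sinh(r/2) · sinh(r) / sinh²(r/4) ≤ 8. -/
/-!
Doubling twice, `sinh (r/2) * sinh r = 8 sinh² (r/4) cosh² (r/4) cosh (r/2)`, so the quotient equals
`8 e^{-3r/2} cosh² (r/4) cosh (r/2)`. Bounding each `cosh t` by `e^t` leaves `8 e^{-r/2} ≤ 8`.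
-/

open Real

namespace Real

theorem cosh_le_exp_abs (x : ℝ) : cosh x ≤ exp |x| := by
  have h : exp (-|x|) ≤ exp |x| := exp_le_exp.2 (by linarith [abs_nonneg x])
  rw [← cosh_abs, cosh_eq]
  linarith

theorem sinh_two_mul_mul_sinh_four_mul (x : ℝ) :
    sinh (2 * x) * sinh (4 * x) = 8 * sinh x ^ 2 * (cosh x ^ 2 * cosh (2 * x)) := by
  rw [show 4 * x = 2 * (2 * x) by ring, sinh_two_mul (2 * x), sinh_two_mul x]
  ring

theorem cosh_sq_mul_cosh_two_mul_le_exp (x : ℝ) : cosh x ^ 2 * cosh (2 * x) ≤ exp (4 * |x|) := by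
  calc cosh x ^ 2 * cosh (2 * x) ≤ exp |x| ^ 2 * exp |2 * x| := by
        gcongr
        · exact cosh_le_exp_abs x
        · exact cosh_le_exp_abs (2 * x)
    _ = exp (4 * |x|) := by
        rw [abs_mul, abs_two, ← exp_nat_mul, ← exp_add]
        ring_nf

end Real

/-- For every real number `r > 0`,
`e^{−3r/2} · sinh(r/2) · sinh(r) / sinh²(r/4) ≤ 8`. -/
theorem boundary_term_bound (r : ℝ) (hr : 0 < r) :
    Real.exp (-(3 * r) / 2) * Real.sinh (r / 2) * Real.sinh r / (Real.sinh (r / 4)) ^ 2 ≤ 8 := by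
  set x := r / 4 with hx
  have hr4 : r = 4 * x := by rw [hx]; ring
  have hx_pos : 0 < x := by positivity
  have hsinh : sinh x ≠ 0 := (sinh_pos_iff.2 hx_pos).ne'
  calc exp (-(3 * r) / 2) * sinh (r / 2) * sinh r / sinh x ^ 2
      = 8 * (exp (-(6 * x)) * (cosh x ^ 2 * cosh (2 * x))) := by
        rw [mul_assoc, hr4, show 4 * x / 2 = 2 * x by ring, sinh_two_mul_mul_sinh_four_mul]
        field_simp
        ring_nf
    _ ≤ 8 * (exp (-(6 * x)) * exp (4 * |x|)) := by
        gcongr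
        exact cosh_sq_mul_cosh_two_mul_le_exp x
    _ = 8 * exp (-(2 * x)) := by
        rw [abs_of_pos hx_pos, ← exp_add]
        ring_nf
    _ ≤ 8 := by
        have : exp (-(2 * x)) ≤ 1 := exp_le_one_iff.2 (by linarith)
        linarith
end

section
/- Let F be a totally real number field of degree d with real embeddings σ₁,…,σ_d : F → ℝ and unit group O_F^× of its ring of integers. Then the family ( ∏_{j=1}^{d} (1 + σ_j(ε)²)^{−1} )_{ε ∈ O_F^×} is summable, i.e. the series ∑_{ε ∈ O_F^×} ∏_{j=1}^{d} (1 + σ_j(ε)²)^{−1} converges. -/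
/-!
Write `P(ε) = ∏_w (1 + w(ε)²)` over the infinite places, which are all real and correspond to
the `σ_j`. For a unit the product formula gives `∏_w w(ε) = 1`, so `P(ε)` dominates both `w(ε)²`
and `w(ε)⁻²`, i.e. `P(ε) ≥ exp (2 ‖log ε‖)` for the logarithmic embedding. The logarithmic
embedding has finite kernel (the torsion) and maps the units onto a lattice, and `exp (-c ‖z‖)`
decays faster than any power of `‖z‖`, so it is summable over a lattice.
-/

open NumberField

open Finset in
theorem prod_sq_le_prod_one_add_sq {ι : Type*} [Fintype ι] (a : ι → ℝ) (s : Finset ι) :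
    ∏ i ∈ s, a i ^ 2 ≤ ∏ i, (1 + a i ^ 2) :=
  calc ∏ i ∈ s, a i ^ 2 ≤ ∏ i ∈ s, (1 + a i ^ 2) :=
        prod_le_prod (fun i _ => sq_nonneg _) (fun i _ => by linarith)
    _ ≤ ∏ i, (1 + a i ^ 2) :=
        prod_le_prod_of_subset_of_one_le (subset_univ s) (fun i _ => by positivity)
          fun i _ _ => by nlinarith [sq_nonneg (a i)]

open Finset Real in
theorem two_mul_abs_log_le_log_prod_one_add_sq {ι : Type*} [Fintype ι] {a : ι → ℝ}
    (ha : ∀ i, 0 < a i) (hprod : ∏ i, a i = 1) (k : ι) :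
    2 * |log (a k)| ≤ log (∏ i, (1 + a i ^ 2)) := by
  classical
  have hk : 0 < a k := ha k
  have herase : ∏ i ∈ univ.erase k, a i = (a k)⁻¹ :=
    eq_inv_of_mul_eq_one_left ((prod_erase_mul _ _ (mem_univ k)).trans hprod)
  have hupper : log (a k ^ 2) ≤ log (∏ i, (1 + a i ^ 2)) :=
    log_le_log (by positivity) (by simpa using prod_sq_le_prod_one_add_sq a {k})
  have hlower : log ((a k)⁻¹ ^ 2) ≤ log (∏ i, (1 + a i ^ 2)) := by
    refine log_le_log (by positivity) ?_
    simpa [prod_pow, herase] using prod_sq_le_prod_one_add_sq a (univ.erase k)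
  rw [log_pow] at hupper hlower
  rw [log_inv] at hlower
  push_cast at hupper hlower
  cases abs_cases (log (a k)) <;> linarith

open Real in
theorem ZLattice.summable_exp_neg_mul_norm {E : Type*} [NormedAddCommGroup E] [NormedSpace ℝ E]
    [FiniteDimensional ℝ E] (L : Submodule ℤ E) [DiscreteTopology L] {c : ℝ} (hc : 0 < c) :
    Summable fun z : L => exp (-c * ‖z‖) := by
  set n := Module.finrank ℤ L + 1
  refine Summable.of_norm_bounded_eventually
    ((summable_norm_pow_inv L n (Nat.lt_succ_self _)).mul_left (n.factorial / c ^ n)) ?_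
  filter_upwards [Set.Finite.compl_mem_cofinite (Set.finite_singleton (0 : L))] with z hz
  have hz : 0 < ‖z‖ := norm_pos_iff.mpr hz
  calc ‖exp (-c * ‖z‖)‖ = (exp (c * ‖z‖))⁻¹ := by
        rw [norm_of_nonneg (exp_pos _).le, neg_mul, exp_neg]
    _ ≤ ((c * ‖z‖) ^ n / n.factorial)⁻¹ :=
        inv_anti₀ (by positivity) (pow_div_factorial_le_exp _ (by positivity) n)
    _ = n.factorial / c ^ n * ‖z‖⁻¹ ^ n := by
        rw [inv_div, mul_pow, inv_pow]
        ring

theorem QuotientGroup.summable_comp_mk {G : Type*} [Group G] (H : Subgroup G) [Finite H]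
    {u : G ⧸ H → ℝ} (hu : Summable u) : Summable fun g : G => u g := by
  have := summable_mul_of_summable_norm (f := u) (g := fun _ : H => (1 : ℝ)) hu.norm .of_finite
  simp_rw [mul_one] at this
  -- `(Subgroup.groupEquivQuotientProdSubgroup g).1` is `↑g` definitionally
  exact (Subgroup.groupEquivQuotientProdSubgroup (s := H)).summable_iff.mpr this

open InfinitePlace NumberField.Units dirichletUnitTheorem Real

variable {K : Type*} [Field K] [NumberField K]

open scoped Classical in
theorem NumberField.Units.summable_exp_neg_mul_norm_logEmbedding {c : ℝ} (hc : 0 < c) :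
    Summable fun ε : (𝓞 K)ˣ => exp (-c * ‖logEmbedding K (Additive.ofMul ε)‖) := by
  have hlattice := (ZLattice.summable_exp_neg_mul_norm (unitLattice K) hc).comp_injective
    (logEmbeddingEquiv K).injective
  exact QuotientGroup.summable_comp_mk (torsion K)
    (u := fun q => exp (-c * ‖logEmbeddingEquiv K (Additive.ofMul q)‖)) hlattice

theorem NumberField.Units.prod_infinitePlace_eq_one [IsTotallyReal K] (ε : (𝓞 K)ˣ) :
    ∏ w : InfinitePlace K, w ε = 1 := by
  simpa [Units.norm] using prod_eq_abs_norm (ε : K)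

open scoped Classical in
theorem NumberField.Units.prod_inv_one_add_sq_le_exp_neg_norm_logEmbedding [IsTotallyReal K]
    (ε : (𝓞 K)ˣ) :
    ∏ w : InfinitePlace K, (1 + w ε ^ 2)⁻¹ ≤ exp (-2 * ‖logEmbedding K (Additive.ofMul ε)‖) := by
  set P := ∏ w : InfinitePlace K, (1 + w ε ^ 2)
  have hplace (w : InfinitePlace K) : 2 * |log (w ε)| ≤ log P :=
    two_mul_abs_log_le_log_prod_one_add_sq (pos_at_place ε) (prod_infinitePlace_eq_one ε) w
  have hlog : 2 * ‖logEmbedding K (Additive.ofMul ε)‖ ≤ log P := by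
    have hP : 0 ≤ log P / 2 := by linarith [hplace w₀, abs_nonneg (log (w₀ (ε : K)))]
    rw [← le_div_iff₀' two_pos, pi_norm_le_iff_of_nonneg hP]
    intro w
    rw [le_div_iff₀' two_pos, logEmbedding_component, IsTotallyReal.mult_eq, Nat.cast_one,
      one_mul, Real.norm_eq_abs]
    exact hplace w
  calc ∏ w : InfinitePlace K, (1 + w ε ^ 2)⁻¹ = (exp (log P))⁻¹ := by
        rw [exp_log (by positivity), Finset.prod_inv_distrib]
    _ ≤ exp (-2 * ‖logEmbedding K (Additive.ofMul ε)‖) := by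
        rw [neg_mul, exp_neg]
        exact inv_anti₀ (exp_pos _) (exp_le_exp.mpr hlog)

theorem NumberField.InfinitePlace.bijective_mk_ofReal_comp [IsTotallyReal K] {ι : Type*}
    [Fintype ι] (hcard : Fintype.card ι = Module.finrank ℚ K) {σ : ι → K →+* ℝ}
    (hσ : Function.Injective σ) :
    Function.Bijective fun i => mk (Complex.ofRealHom.comp (σ i)) := by
  refine (Fintype.bijective_iff_injective_and_card _).mpr ⟨fun i j hij => hσ ?_, ?_⟩
  · rcases mk_eq_iff.mp hij with h | h
    all_goals ext x; simpa using congr($h x)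
  · rw [hcard, IsTotallyReal.finrank, card_eq_nrRealPlaces_add_nrComplexPlaces,
      IsTotallyReal.nrComplexPlaces_eq_zero, add_zero]

/-- Let `F` be a totally real number field of degree `d`, with distinct real embeddings
`σ₁, …, σ_d`. The family `ε ↦ ∏_j (1 + σ_j(ε)²)⁻¹`, indexed by the unit group `(𝓞 F)ˣ`,
is summable. -/
theorem summable_units_prod (F : Type) [Field F] [NumberField F]
    (htr : ∀ v : InfinitePlace F, v.IsReal)
    (d : ℕ) (hd : d = Module.finrank ℚ F)
    (σ : Fin d → (F →+* ℝ)) (hσ : Function.Injective σ) :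
    Summable fun ε : (𝓞 F)ˣ =>
      ∏ j : Fin d, (1 + (σ j ((ε : 𝓞 F) : F)) ^ 2)⁻¹ := by
  classical
  have : IsTotallyReal F := ⟨htr⟩
  have hplaces := bijective_mk_ofReal_comp (by rw [Fintype.card_fin, hd]) hσ
  have hreindex (ε : (𝓞 F)ˣ) :
      ∏ j, (1 + σ j ε ^ 2)⁻¹ = ∏ w : InfinitePlace F, (1 + w ε ^ 2)⁻¹ :=
    Fintype.prod_bijective _ hplaces _ _ fun j => by simp [InfinitePlace.apply]
  simp_rw [hreindex]
  exact (summable_exp_neg_mul_norm_logEmbedding two_pos).of_nonneg_of_le (fun ε => by positivity)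
    prod_inv_one_add_sq_le_exp_neg_norm_logEmbedding
end
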